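/- Let a1, …, a7 ∈ ℂ with a1 ≠ 0 and a3 ≠ 0, and let (x, y) ∈ ℂ² with y ≠ 0. Then the composition w2 ∘ σ13 ∘ σ12 (applying σ12 first, and applying each subsequent map with the parameters produced by the previous one) is given by the formula: (x, y; a1,…,a7) ↦ (−y, x − y − a5 − a1/y² − a2/(a1·y); −a6, a7 − 2a5²a6 − 2a2a6/a1, −a1, −a2, a5, −a3, −a4 − 2a3a5² + 2a2a3/a1). (This is the non-autonomous Hietarinta–Viallet equation.) -/
import Mathlib

/-- A point `(x, y)` of the plane together with the parameter tuple `(a1, …, a7)`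
(`a i` denotes the parameter `a_{i+1}`). -/
abbrev Param : Type := ℂ × ℂ × (Fin 7 → ℂ)

/-- `σ12(x, y; a1,…,a7) = (−y, −x; −a3, −a4, −a1, −a2, a5, −a6, a7 − 4a5²a6)`. -/
noncomputable def sigma12 (p : Param) : Param :=
  let x := p.1; let y := p.2.1; let a := p.2.2
  (-y, -x,
    ![-(a 2), -(a 3), -(a 0), -(a 1), a 4, -(a 5), a 6 - 4 * (a 4) ^ 2 * a 5])

/-- `σ13(x, y; a1,…,a7) = (x, x − y − a5; a6, a7 − 2a5²a6, −a3, a4, a5, a1, a2 + 2a1a5²)`. -/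
noncomputable def sigma13 (p : Param) : Param :=
  let x := p.1; let y := p.2.1; let a := p.2.2
  (x, x - y - a 4,
    ![a 5, a 6 - 2 * (a 4) ^ 2 * a 5, -(a 2), a 3, a 4, a 0, a 1 + 2 * a 0 * (a 4) ^ 2])

/-- `w2(x, y; a1,…,a7) = (x, y − a3/x² − a4/(a3x); a1, a2 − 2a1a4/a3, −a3, a4, a5, a6,
a7 + 2a4a6/a3)`. -/
noncomputable def w2map (p : Param) : Param :=
  let x := p.1; let y := p.2.1; let a := p.2.2
  (x, y - a 2 / x ^ 2 - a 3 / (a 2 * x),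
    ![a 0, a 1 - 2 * a 0 * a 3 / a 2, -(a 2), a 3, a 4, a 5, a 6 + 2 * a 3 * a 5 / a 2])

private lemma vec7_val_five (x0 x1 x2 x3 x4 x5 x6 : ℂ) :
    ![x0, x1, x2, x3, x4, x5, x6] 5 = x5 := rfl

private lemma vec7_val_six (x0 x1 x2 x3 x4 x5 x6 : ℂ) :
    ![x0, x1, x2, x3, x4, x5, x6] 6 = x6 := rfl

/-- The non-autonomous Hietarinta–Viallet equation: the composition `w2 ∘ σ13 ∘ σ12`
(applying `σ12` first, each map acting on the point and parameters produced by the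
previous one) is given by the stated explicit formula. -/
theorem nonautonomous_HV (a : Fin 7 → ℂ) (ha1 : a 0 ≠ 0) (ha3 : a 2 ≠ 0)
    (x y : ℂ) (hy : y ≠ 0) :
    w2map (sigma13 (sigma12 (x, y, a))) =
      (-y, x - y - a 4 - a 0 / y ^ 2 - a 1 / (a 0 * y),
        ![-(a 5), a 6 - 2 * (a 4) ^ 2 * a 5 - 2 * a 1 * a 5 / a 0,
          -(a 0), -(a 1), a 4, -(a 2),
          -(a 3) - 2 * a 2 * (a 4) ^ 2 + 2 * a 1 * a 2 / a 0]) := by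
  simp only [sigma12, sigma13, w2map, Matrix.cons_val_zero, Matrix.cons_val_one,
    Matrix.head_cons, Matrix.cons_val_two, Matrix.tail_cons, Matrix.cons_val_three,
    Matrix.cons_val_four, vec7_val_five, vec7_val_six]
  refine Prod.ext rfl (Prod.ext ?_ ?_)
  · field_simp
    ring
  · funext i
    fin_cases i <;>
      simp only [Matrix.cons_val_zero, Matrix.cons_val_one, Matrix.head_cons,
        Matrix.cons_val_two, Matrix.tail_cons, Matrix.cons_val_three,
        Matrix.cons_val_four, vec7_val_five, vec7_val_six, Fin.isValue] <;>
      first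
      | ring
      | (field_simp
         ring)
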